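/- For every natural number K ≥ 1, every u ∈ (−1,1) and all ξ, x ∈ ℝ, the K-th u-derivative of the stationary system G_0(θ_0,ψ_0) = 0 gives the identities: (i) u·∂_ξ∂_u^K θ_0 − ∂_u^K ψ_0 + K·∂_ξ∂_u^{K−1} θ_0 = 0, and (ii) u·∂_ξ∂_u^K ψ_0 − ∂_x²∂_u^K θ_0 + Σ_{m=0}^{K−1} binom(K−1,m)·∂_u^m[cos∘θ_0]·∂_u^{K−m} θ_0 + K·∂_ξ∂_u^{K−1} ψ_0 = 0, where all functions are evaluated at (ξ,u,x). -/

import Mathlib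

/-!
In the moving frame `y = x - ξ` the soliton pair is `θ₀ = Θ(u, y)`, `ψ₀ = Ψ(u, y)` with
`Θ(u, y) = kinkθ u y = θ_K(γ(u) y)` and `Ψ(u, y) = kinkψ u y = -u ∂_y Θ`; since `θ_K'' = sin θ_K` and `γ²(1 - u²) = 1`, also
`u ∂_y Ψ = sin Θ - ∂_y² Θ`. The claim is the `K`-th `u`-derivative of these two identities.
Because `Θ` and `Ψ` are smooth on `(-1, 1) × ℝ`, symmetry of second derivatives lets `∂_y` (that
is, `-∂_ξ` and `∂_x`) commute with `∂_u^K`; Leibniz's rule gives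
`∂_u^K (u f) = u ∂_u^K f + K ∂_u^{K-1} f`, and writing `∂_u^K sin Θ = ∂_u^{K-1} (cos Θ · ∂_u Θ)`
produces the binomial sum.
-/

noncomputable def θK (x : ℝ) : ℝ := 4 * Real.arctan (Real.exp x)

noncomputable def γ (u : ℝ) : ℝ := 1 / Real.sqrt (1 - u ^ 2)

noncomputable def θ₀ (ξ u x : ℝ) : ℝ := θK (γ u * (x - ξ))

noncomputable def ψ₀ (ξ u x : ℝ) : ℝ := -(u * γ u * deriv θK (γ u * (x - ξ)))

open Real Set Filter Topology Function
open scoped ContDiff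

section OneVariable
variable {s : Set ℝ} {f : ℝ → ℝ} {u : ℝ}

theorem iteratedDeriv_id_mul {n : ℕ} (hf : ContDiffAt ℝ n f u) :
    iteratedDeriv n (fun v => v * f v) u
      = u * iteratedDeriv n f u + n * iteratedDeriv (n - 1) f u := by
  rw [iteratedDeriv_fun_mul contDiffAt_fun_id hf]
  rcases n with _ | n
  · simp
  rw [Finset.sum_range_succ', Finset.sum_range_succ']
  simp [iteratedDeriv_fun_id, add_comm, mul_comm]

theorem iteratedDeriv_succ_comp (hs : IsOpen s) (hf : ContDiffOn ℝ ∞ f s) (hu : u ∈ s)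
    {g : ℝ → ℝ} (hg : ContDiff ℝ ∞ g) (n : ℕ) :
    iteratedDeriv (n + 1) (fun v => g (f v)) u
      = ∑ m ∈ Finset.range (n + 1), (n.choose m : ℝ)
          * iteratedDeriv m (fun v => deriv g (f v)) u * iteratedDeriv (n + 1 - m) f u := by
  have hchain : deriv (fun v => g (f v)) =ᶠ[𝓝 u] fun v => deriv g (f v) * deriv f v := by
    filter_upwards [hs.mem_nhds hu] with v hv
    exact deriv_comp v (hg.differentiable (by simp) _)
      ((hf.contDiffAt (hs.mem_nhds hv)).differentiableAt (by simp))
  have hg' : ContDiffAt ℝ n (fun v => deriv g (f v)) u :=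
    ((contDiff_infty_iff_deriv.1 hg).2.contDiffAt.comp u (hf.contDiffAt (hs.mem_nhds hu))).of_le
      (by exact_mod_cast le_top)
  have hf' : ContDiffAt ℝ n (deriv f) u :=
    (((contDiffOn_infty_iff_deriv_of_isOpen hs).1 hf).2.contDiffAt (hs.mem_nhds hu)).of_le
      (by exact_mod_cast le_top)
  rw [iteratedDeriv_succ', hchain.iteratedDeriv_eq, iteratedDeriv_fun_mul hg' hf']
  refine Finset.sum_congr rfl fun m hm => ?_
  rw [show n + 1 - m = n - m + 1 by simp at hm; omega, iteratedDeriv_succ']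

end OneVariable

section Slices
variable {𝕜 E : Type*} [NontriviallyNormedField 𝕜] [NormedAddCommGroup E] [NormedSpace 𝕜 E]
  {G : 𝕜 × 𝕜 → E} {L : 𝕜 × 𝕜 →L[𝕜] E} {U : Set (𝕜 × 𝕜)} {u y : 𝕜}

theorem HasFDerivAt.hasDerivAt_slice_fst (h : HasFDerivAt G L (u, y)) :
    HasDerivAt (fun u' => G (u', y)) (L (1, 0)) u :=
  h.comp_hasDerivAt u ((hasDerivAt_id u).prodMk (hasDerivAt_const u y))

theorem HasFDerivAt.hasDerivAt_slice_snd (h : HasFDerivAt G L (u, y)) :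
    HasDerivAt (fun y' => G (u, y')) (L (0, 1)) y :=
  h.comp_hasDerivAt y ((hasDerivAt_const y u).prodMk (hasDerivAt_id y))

theorem eventually_prodMk_const_mem (hU : IsOpen U) (hp : (u, y) ∈ U) :
    ∀ᶠ u' in 𝓝 u, (u', y) ∈ U :=
  (continuous_id.prodMk continuous_const).continuousAt.preimage_mem_nhds (hU.mem_nhds hp)

theorem eventually_const_prodMk_mem (hU : IsOpen U) (hp : (u, y) ∈ U) :
    ∀ᶠ y' in 𝓝 y, (u, y') ∈ U :=
  (continuous_const.prodMk continuous_id).continuousAt.preimage_mem_nhds (hU.mem_nhds hp)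

end Slices

section PartialDerivatives
variable {U : Set (ℝ × ℝ)} {F : ℝ → ℝ → ℝ} {u x y ξ : ℝ}

theorem hasFDerivAt_uncurry_of_contDiffOn (hU : IsOpen U) (hF : ContDiffOn ℝ ∞ (uncurry F) U)
    (hp : (u, y) ∈ U) : HasFDerivAt (uncurry F) (fderiv ℝ (uncurry F) (u, y)) (u, y) :=
  ((hF.contDiffAt (hU.mem_nhds hp)).differentiableAt (by simp)).hasFDerivAt

theorem contDiffOn_fderiv_uncurry (hU : IsOpen U) (hF : ContDiffOn ℝ ∞ (uncurry F) U) :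
    ContDiffOn ℝ ∞ (fderiv ℝ (uncurry F)) U :=
  ((contDiffOn_infty_iff_fderiv_of_isOpen hU).1 hF).2

theorem contDiffOn_uncurry_deriv_fst (hU : IsOpen U) (hF : ContDiffOn ℝ ∞ (uncurry F) U) :
    ContDiffOn ℝ ∞ (uncurry fun u y => deriv (fun u' => F u' y) u) U :=
  ((contDiffOn_fderiv_uncurry hU hF).clm_apply contDiffOn_const).congr fun _ hp =>
    (hasFDerivAt_uncurry_of_contDiffOn hU hF hp).hasDerivAt_slice_fst.deriv

theorem contDiffOn_uncurry_deriv_snd (hU : IsOpen U) (hF : ContDiffOn ℝ ∞ (uncurry F) U) :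
    ContDiffOn ℝ ∞ (uncurry fun u y => deriv (F u) y) U :=
  ((contDiffOn_fderiv_uncurry hU hF).clm_apply contDiffOn_const).congr fun _ hp =>
    (hasFDerivAt_uncurry_of_contDiffOn hU hF hp).hasDerivAt_slice_snd.deriv

theorem contDiffAt_slice_fst (hU : IsOpen U) (hF : ContDiffOn ℝ ∞ (uncurry F) U)
    (hp : (u, y) ∈ U) (n : ℕ) : ContDiffAt ℝ n (fun u' => F u' y) u :=
  ((hF.contDiffAt (hU.mem_nhds hp)).comp u
    (contDiffAt_id.prodMk contDiffAt_const)).of_le (by exact_mod_cast le_top)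

theorem deriv_snd_deriv_fst_comm (hU : IsOpen U) (hF : ContDiffOn ℝ ∞ (uncurry F) U)
    (hp : (u, y) ∈ U) :
    deriv (fun y' => deriv (fun u' => F u' y') u) y = deriv (fun u' => deriv (F u') y) u := by
  set F' := fderiv ℝ (uncurry F)
  have hF'' : HasFDerivAt F' (fderiv ℝ F' (u, y)) (u, y) :=
    (((contDiffOn_fderiv_uncurry hU hF).contDiffAt (hU.mem_nhds hp)).differentiableAt
      (by simp)).hasFDerivAt
  have hfst : (fun y' => deriv (fun u' => F u' y') u) =ᶠ[𝓝 y] fun y' => F' (u, y') (1, 0) := by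
    filter_upwards [eventually_const_prodMk_mem hU hp] with y' hy'
    exact (hasFDerivAt_uncurry_of_contDiffOn hU hF hy').hasDerivAt_slice_fst.deriv
  have hsnd : (fun u' => deriv (F u') y) =ᶠ[𝓝 u] fun u' => F' (u', y) (0, 1) := by
    filter_upwards [eventually_prodMk_const_mem hU hp] with u' hu'
    exact (hasFDerivAt_uncurry_of_contDiffOn hU hF hu').hasDerivAt_slice_snd.deriv
  have hsymm : IsSymmSndFDerivAt ℝ (uncurry F) (u, y) :=
    (hF.contDiffAt (hU.mem_nhds hp)).isSymmSndFDerivAt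
      (by simp only [minSmoothness_of_isRCLikeNormedField]; exact WithTop.coe_le_coe.2 le_top)
  rw [hfst.deriv_eq, hsnd.deriv_eq,
    (hF''.hasDerivAt_slice_snd.clm_apply (hasDerivAt_const y ((1 : ℝ), (0 : ℝ)))).deriv,
    (hF''.hasDerivAt_slice_fst.clm_apply (hasDerivAt_const u ((0 : ℝ), (1 : ℝ)))).deriv]
  simpa using hsymm.eq (0, 1) (1, 0)

theorem hasDerivAt_snd_iteratedDeriv_fst (hU : IsOpen U) (hF : ContDiffOn ℝ ∞ (uncurry F) U)
    (hp : (u, y) ∈ U) (k : ℕ) :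
    HasDerivAt (fun y' => iteratedDeriv k (fun u' => F u' y') u)
      (iteratedDeriv k (fun u' => deriv (F u') y) u) y := by
  induction k generalizing F with
  | zero =>
    simpa using
      (hasFDerivAt_uncurry_of_contDiffOn hU hF hp).hasDerivAt_slice_snd.differentiableAt.hasDerivAt
  | succ k ih =>
    -- `∂_u^(k+1) = ∂_u^k ∘ ∂_u`: apply the induction hypothesis to `∂_u F`, after one commutation
    -- `∂_y ∂_u F = ∂_u ∂_y F` near `u`.
    have hcomm : (fun u' => deriv (fun y' => deriv (fun u'' => F u'' y') u') y)
        =ᶠ[𝓝 u] deriv (fun u' => deriv (F u') y) := by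
      filter_upwards [eventually_prodMk_const_mem hU hp] with u' hu'
      exact deriv_snd_deriv_fst_comm hU hF hu'
    simp only [iteratedDeriv_succ']
    rw [← hcomm.iteratedDeriv_eq]
    exact ih (contDiffOn_uncurry_deriv_fst hU hF)

theorem deriv_iteratedDeriv_comp_const_sub (hU : IsOpen U) (hF : ContDiffOn ℝ ∞ (uncurry F) U)
    (hp : (u, x - ξ) ∈ U) (k : ℕ) :
    deriv (fun ξ' => iteratedDeriv k (fun u' => F u' (x - ξ')) u) ξ
      = -iteratedDeriv k (fun u' => deriv (F u') (x - ξ)) u := by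
  rw [deriv_comp_const_sub (f := fun y => iteratedDeriv k (fun u' => F u' y) u),
    (hasDerivAt_snd_iteratedDeriv_fst hU hF hp k).deriv]

theorem deriv_iteratedDeriv_comp_sub_const (hU : IsOpen U) (hF : ContDiffOn ℝ ∞ (uncurry F) U)
    (hp : (u, x - ξ) ∈ U) (k : ℕ) :
    deriv (fun x' => iteratedDeriv k (fun u' => F u' (x' - ξ)) u) x
      = iteratedDeriv k (fun u' => deriv (F u') (x - ξ)) u := by
  rw [deriv_comp_sub_const (f := fun y => iteratedDeriv k (fun u' => F u' y) u),
    (hasDerivAt_snd_iteratedDeriv_fst hU hF hp k).deriv]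

theorem ContDiffOn.comp_prodMk_const {n : ℕ∞ω} {s : Set ℝ}
    (hF : ContDiffOn ℝ n (uncurry F) (s ×ˢ univ)) (y : ℝ) : ContDiffOn ℝ n (fun u => F u y) s :=
  hF.comp (contDiff_prodMk_left y).contDiffOn fun _ hu => ⟨hu, mem_univ y⟩

end PartialDerivatives

theorem deriv_θK : deriv θK = fun x => 4 * (exp x / (1 + exp x ^ 2)) :=
  funext fun x => ((((hasDerivAt_arctan (exp x)).comp x (hasDerivAt_exp x)).const_mul 4).congr_deriv
    (by ring)).deriv

theorem sin_θK (x : ℝ) :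
    sin (θK x) = 4 * exp x * (1 - exp x ^ 2) / (1 + exp x ^ 2) ^ 2 := by
  have hsqrt : √(1 + exp x ^ 2) ^ 2 = 1 + exp x ^ 2 := sq_sqrt (by positivity)
  rw [θK, show 4 * arctan (exp x) = 2 * (2 * arctan (exp x)) by ring, sin_two_mul, sin_two_mul,
    cos_two_mul, sin_arctan, cos_arctan]
  field_simp
  rw [show √(1 + exp x ^ 2) ^ 4 = (√(1 + exp x ^ 2) ^ 2) ^ 2 by ring, hsqrt]
  ring

theorem deriv_deriv_θK : deriv (deriv θK) = fun x => sin (θK x) := funext fun x => by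
  have hden : HasDerivAt (fun x => 1 + exp x ^ 2) (2 * exp x * exp x) x := by
    simpa using ((hasDerivAt_exp x).pow 2).const_add 1
  rw [deriv_θK, sin_θK]
  exact ((((hasDerivAt_exp x).fun_div hden (by positivity)).const_mul 4).congr_deriv
    (by ring)).deriv

theorem contDiff_θK : ContDiff ℝ ∞ θK :=
  contDiff_const.mul (contDiff_arctan.comp contDiff_exp)

theorem contDiffOn_γ : ContDiffOn ℝ ∞ γ (Ioo (-1) 1) := fun u hu => by
  have hpos : 0 < 1 - u ^ 2 := by nlinarith [hu.1, hu.2]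
  have hsqrt : ContDiffAt ℝ ∞ (fun v => √(1 - v ^ 2)) u :=
    (contDiffAt_sqrt hpos.ne').comp u (by fun_prop)
  exact (contDiffAt_const.div hsqrt (sqrt_pos.2 hpos).ne').contDiffWithinAt

theorem γ_sq_mul_one_sub_sq {u : ℝ} (hu : u ∈ Ioo (-1 : ℝ) 1) : γ u ^ 2 * (1 - u ^ 2) = 1 := by
  have hpos : 0 < 1 - u ^ 2 := by nlinarith [hu.1, hu.2]
  rw [γ, div_pow, sq_sqrt hpos.le]
  field_simp

noncomputable def kinkθ (u y : ℝ) : ℝ := θK (γ u * y)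

noncomputable def kinkψ (u y : ℝ) : ℝ := -(u * γ u * deriv θK (γ u * y))

theorem θ₀_eq_kinkθ (ξ u x : ℝ) : θ₀ ξ u x = kinkθ u (x - ξ) := rfl

theorem ψ₀_eq_kinkψ (ξ u x : ℝ) : ψ₀ ξ u x = kinkψ u (x - ξ) := rfl

theorem contDiffOn_γ_mul : ContDiffOn ℝ ∞ (fun p : ℝ × ℝ => γ p.1 * p.2) (Ioo (-1) 1 ×ˢ univ) :=
  (contDiffOn_γ.comp contDiffOn_fst fun _ hp => hp.1).mul contDiffOn_snd

theorem contDiffOn_kinkθ : ContDiffOn ℝ ∞ (uncurry kinkθ) (Ioo (-1) 1 ×ˢ univ) :=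
  contDiff_θK.comp_contDiffOn contDiffOn_γ_mul

theorem contDiffOn_kinkψ : ContDiffOn ℝ ∞ (uncurry kinkψ) (Ioo (-1) 1 ×ˢ univ) :=
  ((contDiffOn_fst.mul (contDiffOn_γ.comp contDiffOn_fst fun _ hp => hp.1)).mul
    ((contDiff_infty_iff_deriv.1 contDiff_θK).2.comp_contDiffOn contDiffOn_γ_mul)).neg

theorem deriv_kinkθ (u : ℝ) : deriv (kinkθ u) = fun y => γ u * deriv θK (γ u * y) :=
  funext fun y => deriv_comp_mul_left (γ u) θK y

theorem kinkψ_eq_neg_mul_deriv_kinkθ (u y : ℝ) : kinkψ u y = -(u * deriv (kinkθ u) y) := by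
  rw [deriv_kinkθ, kinkψ, mul_assoc]

theorem deriv_deriv_kinkθ (u y : ℝ) :
    deriv (deriv (kinkθ u)) y = γ u * (γ u * sin (kinkθ u y)) := by
  simp only [deriv_kinkθ, deriv_const_mul_field', deriv_comp_mul_left, smul_eq_mul,
    deriv_deriv_θK, kinkθ]

theorem mul_deriv_kinkψ {u : ℝ} (hu : u ∈ Ioo (-1 : ℝ) 1) (y : ℝ) :
    u * deriv (kinkψ u) y = sin (kinkθ u y) - deriv (deriv (kinkθ u)) y := by
  simp only [funext (kinkψ_eq_neg_mul_deriv_kinkθ u), deriv.fun_neg, deriv_const_mul_field',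
    deriv_deriv_kinkθ]
  linear_combination sin (kinkθ u y) * γ_sq_mul_one_sub_sq hu

section KinkDerivatives
variable {u : ℝ} (y : ℝ)

theorem iteratedDeriv_kinkψ (hu : u ∈ Ioo (-1 : ℝ) 1) (K : ℕ) :
    iteratedDeriv K (fun u' => kinkψ u' y) u
      = -(u * iteratedDeriv K (fun u' => deriv (kinkθ u') y) u
        + K * iteratedDeriv (K - 1) (fun u' => deriv (kinkθ u') y) u) := by
  have hU : IsOpen (Ioo (-1 : ℝ) 1 ×ˢ (univ : Set ℝ)) := isOpen_Ioo.prod isOpen_univ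
  rw [funext fun u' => kinkψ_eq_neg_mul_deriv_kinkθ u' y, iteratedDeriv_fun_neg,
    iteratedDeriv_id_mul (contDiffAt_slice_fst hU
      (contDiffOn_uncurry_deriv_snd hU contDiffOn_kinkθ) ⟨hu, trivial⟩ K)]

theorem iteratedDeriv_succ_mul_deriv_kinkψ (hu : u ∈ Ioo (-1 : ℝ) 1) (n : ℕ) :
    u * iteratedDeriv (n + 1) (fun u' => deriv (kinkψ u') y) u
        + (n + 1) * iteratedDeriv n (fun u' => deriv (kinkψ u') y) u
      = ∑ m ∈ Finset.range (n + 1), (n.choose m : ℝ)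
          * iteratedDeriv m (fun u' => cos (kinkθ u' y)) u
          * iteratedDeriv (n + 1 - m) (fun u' => kinkθ u' y) u
        - iteratedDeriv (n + 1) (fun u' => deriv (deriv (kinkθ u')) y) u := by
  have hU : IsOpen (Ioo (-1 : ℝ) 1 ×ˢ (univ : Set ℝ)) := isOpen_Ioo.prod isOpen_univ
  have hp : (u, y) ∈ Ioo (-1 : ℝ) 1 ×ˢ (univ : Set ℝ) := ⟨hu, trivial⟩
  have hstationary : (fun u' => u' * deriv (kinkψ u') y) =ᶠ[𝓝 u]
      fun u' => sin (kinkθ u' y) - deriv (deriv (kinkθ u')) y := by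
    filter_upwards [isOpen_Ioo.mem_nhds hu] with u' hu'
    exact mul_deriv_kinkψ hu' y
  have h := hstationary.iteratedDeriv_eq (n + 1)
  rw [iteratedDeriv_id_mul
      (contDiffAt_slice_fst hU (contDiffOn_uncurry_deriv_snd hU contDiffOn_kinkψ) hp _),
    iteratedDeriv_fun_sub (f := fun u' => sin (kinkθ u' y))
      (contDiff_sin.contDiffAt.comp u (contDiffAt_slice_fst hU contDiffOn_kinkθ hp _))
      (contDiffAt_slice_fst hU
        (contDiffOn_uncurry_deriv_snd hU (contDiffOn_uncurry_deriv_snd hU contDiffOn_kinkθ)) hp _),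
    iteratedDeriv_succ_comp isOpen_Ioo (contDiffOn_kinkθ.comp_prodMk_const y) hu contDiff_sin n,
    Nat.add_sub_cancel] at h
  simpa only [Real.deriv_sin, Nat.cast_add, Nat.cast_one] using h

end KinkDerivatives

/-- The `K`-th `u`-derivative of the stationary system `G₀(θ₀,ψ₀) = 0`:
(i) `u ∂_ξ ∂_u^K θ₀ − ∂_u^K ψ₀ + K ∂_ξ ∂_u^{K−1} θ₀ = 0`, and
(ii) `u ∂_ξ ∂_u^K ψ₀ − ∂_x² ∂_u^K θ₀
      + Σ_{m=0}^{K−1} C(K−1,m) ∂_u^m[cos ∘ θ₀] ∂_u^{K−m} θ₀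
      + K ∂_ξ ∂_u^{K−1} ψ₀ = 0`. -/
theorem u_derivatives_of_stationary_system (K : ℕ) (hK : 1 ≤ K)
    (u : ℝ) (hu : u ∈ Set.Ioo (-1 : ℝ) 1) :
    ∀ ξ x : ℝ,
      u * deriv (fun ξ' => iteratedDeriv K (fun u' => θ₀ ξ' u' x) u) ξ
          - iteratedDeriv K (fun u' => ψ₀ ξ u' x) u
          + K * deriv (fun ξ' => iteratedDeriv (K - 1) (fun u' => θ₀ ξ' u' x) u) ξ = 0 ∧
      u * deriv (fun ξ' => iteratedDeriv K (fun u' => ψ₀ ξ' u' x) u) ξ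
          - deriv (deriv (fun x' => iteratedDeriv K (fun u' => θ₀ ξ u' x') u)) x
          + (∑ m ∈ Finset.range K, ((K - 1).choose m : ℝ)
              * iteratedDeriv m (fun u' => Real.cos (θ₀ ξ u' x)) u
              * iteratedDeriv (K - m) (fun u' => θ₀ ξ u' x) u)
          + K * deriv (fun ξ' => iteratedDeriv (K - 1) (fun u' => ψ₀ ξ' u' x) u) ξ = 0 := by
  intro ξ x
  have hU : IsOpen (Ioo (-1 : ℝ) 1 ×ˢ (univ : Set ℝ)) := isOpen_Ioo.prod isOpen_univ
  have hp : ∀ y, (u, y) ∈ Ioo (-1 : ℝ) 1 ×ˢ (univ : Set ℝ) := fun _ => ⟨hu, trivial⟩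
  obtain ⟨n, rfl⟩ : ∃ n, K = n + 1 := ⟨K - 1, by omega⟩
  simp only [θ₀_eq_kinkθ, ψ₀_eq_kinkψ, Nat.add_sub_cancel,
    deriv_iteratedDeriv_comp_const_sub hU contDiffOn_kinkθ (hp _),
    deriv_iteratedDeriv_comp_const_sub hU contDiffOn_kinkψ (hp _),
    funext fun x' => deriv_iteratedDeriv_comp_sub_const hU contDiffOn_kinkθ (hp (x' - ξ)) (n + 1),
    deriv_iteratedDeriv_comp_sub_const hU (contDiffOn_uncurry_deriv_snd hU contDiffOn_kinkθ) (hp _)]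
  constructor
  · rw [iteratedDeriv_kinkψ (x - ξ) hu]
    push_cast
    ring
  · push_cast
    linear_combination -iteratedDeriv_succ_mul_deriv_kinkψ (x - ξ) hu n
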